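/- arXiv:1601.00668 — 2 statements merged into one kernel-verified Lean document; each statement's English description precedes it below -/
import Mathlib

section
/- For every γ ∈ F_r, the Harish-Chandra function satisfies Ξ(γ) := ∫_B P(γ,ξ)^{1/2} dμ(ξ) = (1 + ((r-1)/r)·|γ|) · (2r-1)^{-|γ|/2}. In particular Ξ(γ) depends only on the word length |γ|. -/
/-!
Setting: the free group `F_r = ⟨a₁,…,a_r⟩` (`r ≥ 2`), its boundary `B` of infinite
reduced words, the visual measure `μ` on `B`, the Gromov product, the Poisson kernel
`P(γ,ξ) = (2r-1)^(2(γ|ξ)-|γ|)` and the Harish-Chandra function `Ξ`.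
-/

open MeasureTheory Filter Topology ComplexConjugate
open scoped ENNReal

namespace ArxivFree

/-- The alphabet `S = {a₁^{±1},…,a_r^{±1}}` of generators and their inverses:
a letter is a generator together with a sign. -/
abbrev Letter (r : ℕ) := Fin r × Bool

/-- The inverse of a letter. -/
def bar {r : ℕ} (x : Letter r) : Letter r := (x.1, !x.2)

/-- The boundary `B`: infinite reduced words over the alphabet, i.e. sequences of
letters in which no letter is immediately followed by its inverse. -/
abbrev Boundary (r : ℕ) := {ξ : ℕ → Letter r // ∀ i, ξ (i + 1) ≠ bar (ξ i)}

/-- `l` is a (finite) prefix of the infinite word `ξ`. -/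
def IsPrefixSeq {r : ℕ} (l : List (Letter r)) (ξ : ℕ → Letter r) : Prop :=
  ∀ i, i < l.length → l[i]? = some (ξ i)

/-- The cylinder `B_u`: infinite reduced words admitting the reduced word of `u`
as a prefix. -/
def cylinder {r : ℕ} (u : FreeGroup (Fin r)) : Set (Boundary r) :=
  {ξ | IsPrefixSeq (FreeGroup.toWord u) ξ.1}

/-- The Gromov product: the length of the longest common prefix of the finite word `l`
and the infinite word `ξ`. -/
def gromov {r : ℕ} (l : List (Letter r)) (ξ : ℕ → Letter r) : ℕ :=
  Nat.findGreatest (fun k => ∀ i, i < k → l[i]? = some (ξ i)) l.length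

/-- The Poisson kernel `P(γ,ξ) = (2r-1)^(2(γ|ξ) - |γ|)`. -/
noncomputable def PK {r : ℕ} (γ : FreeGroup (Fin r)) (ξ : Boundary r) : ℝ :=
  (2 * (r : ℝ) - 1) ^
    (2 * (gromov (FreeGroup.toWord γ) ξ.1 : ℤ) - ((FreeGroup.toWord γ).length : ℤ))

/-- The sphere `S_n ⊆ F_r` of elements of word length `n`, as a finite set. -/
noncomputable def sphere (r n : ℕ) : Finset (FreeGroup (Fin r)) :=
  (Set.Finite.preimage (Function.Injective.injOn FreeGroup.toWord_injective)
    (List.finite_length_eq (Letter r) n)).toFinset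

/-- The Harish-Chandra function `Ξ(γ) = ∫_B P(γ,ξ)^{1/2} dμ(ξ)`. -/
noncomputable def HC {r : ℕ} (μ : Measure (Boundary r)) (γ : FreeGroup (Fin r)) : ℝ :=
  ∫ ξ, Real.sqrt (PK γ ξ) ∂μ

/-!
The square root of the Poisson kernel is `(2r-1)^{(γ|ξ)} · (2r-1)^{-|γ|/2}`, a function of the
Gromov product alone. For `k < |γ|` the event `(γ|ξ) > k` is the cylinder of the prefix of `γ`
of length `k + 1`, of measure `1/(2r(2r-1)^k)`. Writing `(2r-1)^{(γ|ξ)}` as a telescoping sum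
over these events, each of the `|γ|` levels contributes `(2r-2)/(2r) · (2r-1)^{-|γ|/2}`.
-/

theorem _root_.Finset.sum_range_ite_lt_sub {M : Type*} [AddCommGroup M] (F : ℕ → M) {m n : ℕ}
    (h : m ≤ n) :
    ∑ k ∈ Finset.range n, (if k < m then F (k + 1) - F k else 0) = F m - F 0 := by
  have hfilter : (Finset.range n).filter (· < m) = Finset.range m := by
    ext k; simp only [Finset.mem_filter, Finset.mem_range]; omega
  rw [← Finset.sum_filter, hfilter, Finset.sum_range_sub]

theorem _root_.MeasureTheory.integral_comp_nat_eq_add_sum {X : Type*} [MeasurableSpace X]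
    (μ : Measure X) [IsProbabilityMeasure μ] (g : X → ℕ) {n : ℕ} (hg : ∀ x, g x ≤ n)
    (hmeas : ∀ k, MeasurableSet {x | k < g x}) (F : ℕ → ℝ) :
    ∫ x, F (g x) ∂μ = F 0 + ∑ k ∈ Finset.range n, (F (k + 1) - F k) * μ.real {x | k < g x} := by
  have hF : ∀ x, F (g x) =
      F 0 + ∑ k ∈ Finset.range n, {x | k < g x}.indicator (fun _ => F (k + 1) - F k) x := by
    intro x
    simp only [Set.indicator_apply, Set.mem_ofPred_eq, Finset.sum_range_ite_lt_sub F (hg x)]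
    abel
  have hint : ∀ k ∈ Finset.range n,
      Integrable ({x | k < g x}.indicator fun _ => F (k + 1) - F k) μ :=
    fun k _ => (integrable_const _).indicator (hmeas k)
  simp only [hF, integral_add (integrable_const _) (integrable_finsetSum _ hint),
    integral_finsetSum _ hint, integral_indicator_const _ (hmeas _), integral_const,
    probReal_univ, smul_eq_mul, mul_one, mul_comm]

variable {r : ℕ}

theorem measurableSet_isPrefixSeq (w : List (Letter r)) :
    MeasurableSet {ξ : ℕ → Letter r | IsPrefixSeq w ξ} := by
  simp only [IsPrefixSeq, Set.ofPred_forall]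
  exact .iInter fun i => .iInter fun _ =>
    (Set.toFinite {a : Letter r | w[i]? = some a}).measurableSet.preimage (measurable_pi_apply i)

theorem isPrefixSeq_take_iff_le_gromov {l : List (Letter r)} {ξ : ℕ → Letter r} {k : ℕ}
    (hk : k ≤ l.length) : IsPrefixSeq (l.take k) ξ ↔ k ≤ gromov l ξ := by
  have hprefix : IsPrefixSeq (l.take k) ξ ↔ ∀ i, i < k → l[i]? = some (ξ i) := by
    refine forall_congr' fun i => ?_
    rw [List.length_take, min_eq_left hk]
    exact imp_congr_right fun hi => by rw [List.getElem?_take_of_lt hi]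
  rw [hprefix]
  refine ⟨fun h => Nat.le_findGreatest hk h, fun hkg i hi => ?_⟩
  exact Nat.findGreatest_spec (P := fun m => ∀ i, i < m → l[i]? = some (ξ i))
    (Nat.zero_le l.length) (fun _ h => absurd h (Nat.not_lt_zero _)) i (hi.trans_le hkg)

theorem toWord_mk_take (γ : FreeGroup (Fin r)) (k : ℕ) :
    (FreeGroup.mk (γ.toWord.take k)).toWord = γ.toWord.take k :=
  FreeGroup.toWord_mk.trans
    (FreeGroup.isReduced_toWord.infix (List.take_prefix k _).isInfix).reduce_eq

theorem setOf_lt_gromov_eq {l : List (Letter r)} {k : ℕ} (hk : k < l.length) :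
    {ξ | k < gromov l ξ} = {ξ | IsPrefixSeq (l.take (k + 1)) ξ} := by
  ext ξ
  exact (isPrefixSeq_take_iff_le_gromov hk).symm

theorem measurableSet_lt_gromov (l : List (Letter r)) (k : ℕ) :
    MeasurableSet {ξ | k < gromov l ξ} := by
  by_cases hk : k < l.length
  · rw [setOf_lt_gromov_eq hk]
    exact measurableSet_isPrefixSeq _
  · convert MeasurableSet.empty
    exact Set.eq_empty_of_forall_notMem fun ξ hξ =>
      hk (hξ.trans_le (Nat.findGreatest_le l.length))

theorem two_mul_natCast_sub_one_pos (hr : 0 < r) : 0 < 2 * (r : ℝ) - 1 := by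
  have : (1 : ℝ) ≤ r := by exact_mod_cast hr
  linarith

theorem sqrt_PK (hr : 0 < r) (γ : FreeGroup (Fin r)) (ξ : Boundary r) :
    √(PK γ ξ) = (2 * (r : ℝ) - 1) ^ gromov γ.toWord ξ.1 *
      (2 * (r : ℝ) - 1) ^ (-(γ.toWord.length : ℝ) / 2) := by
  have hc := two_mul_natCast_sub_one_pos hr
  rw [PK, ← Real.rpow_intCast, Real.sqrt_eq_rpow, ← Real.rpow_mul hc.le, ← Real.rpow_natCast,
    ← Real.rpow_add hc]
  congr 1
  push_cast
  ring

def IsVisualMeasure (μ : Measure (Boundary r)) : Prop :=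
  ∀ u : FreeGroup (Fin r), u ≠ 1 →
    μ (cylinder u) =
      1 / (2 * (r : ℝ≥0∞) * (2 * (r : ℝ≥0∞) - 1) ^ ((FreeGroup.toWord u).length - 1))

theorem IsVisualMeasure.measureReal_lt_gromov {μ : Measure (Boundary r)}
    (hμ : IsVisualMeasure μ) (hr : 0 < r) (γ : FreeGroup (Fin r)) {k : ℕ}
    (hk : k < γ.toWord.length) :
    μ.real {ξ | k < gromov γ.toWord ξ.1} = 1 / (2 * r * (2 * r - 1) ^ k) := by
  have hcyl : {ξ : Boundary r | k < gromov γ.toWord ξ.1} =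
      cylinder (FreeGroup.mk (γ.toWord.take (k + 1))) := by
    rw [cylinder, toWord_mk_take]
    exact congrArg (Subtype.val ⁻¹' ·) (setOf_lt_gromov_eq hk)
  have hlen : (γ.toWord.take (k + 1)).length = k + 1 := List.length_take_of_le hk
  have hne : FreeGroup.mk (γ.toWord.take (k + 1)) ≠ 1 := by
    intro h
    have := congrArg (fun x => x.toWord.length) h
    simp only [toWord_mk_take, hlen, FreeGroup.toWord_one, List.length_nil] at this
    omega
  rw [measureReal_def, hcyl, hμ _ hne, toWord_mk_take, hlen, Nat.add_sub_cancel]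
  have hsub : (1 : ℝ≥0∞) ≤ 2 * r :=
    one_le_two.trans (le_mul_of_one_le_right' (by exact_mod_cast hr))
  simp [ENNReal.toReal_sub_of_le hsub (by finiteness)]

theorem IsVisualMeasure.HC_eq {μ : Measure (Boundary r)} [IsProbabilityMeasure μ]
    (hμ : IsVisualMeasure μ) (hr : 0 < r) (γ : FreeGroup (Fin r)) :
    HC μ γ = (1 + ((r : ℝ) - 1) / r * (γ.toWord.length : ℝ)) *
      (2 * (r : ℝ) - 1) ^ (-(γ.toWord.length : ℝ) / 2) := by
  set n := γ.toWord.length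
  set c := 2 * (r : ℝ) - 1 with hc_def
  have hc : 0 < c := two_mul_natCast_sub_one_pos hr
  have hlayer := integral_comp_nat_eq_add_sum μ (fun ξ => gromov γ.toWord ξ.1) (n := n)
    (fun ξ => Nat.findGreatest_le _)
    (fun k => (measurableSet_lt_gromov _ k).preimage measurable_subtype_coe)
    (fun k => c ^ k * c ^ (-(n : ℝ) / 2))
  have hterm : ∀ k ∈ Finset.range n,
      (c ^ (k + 1) * c ^ (-(n : ℝ) / 2) - c ^ k * c ^ (-(n : ℝ) / 2)) *
        μ.real {ξ | k < gromov γ.toWord ξ.1} = ((r : ℝ) - 1) / r * c ^ (-(n : ℝ) / 2) := by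
    intro k hk
    rw [hμ.measureReal_lt_gromov hr γ (Finset.mem_range.1 hk), ← hc_def]
    field_simp
    rw [hc_def]
    ring
  simp only [HC, sqrt_PK hr] at hlayer ⊢
  rw [hlayer, Finset.sum_congr rfl hterm, Finset.sum_const, Finset.card_range, nsmul_eq_mul]
  ring

theorem harish_chandra_formula_general {r : ℕ}
    (μ : Measure (Boundary r)) [IsProbabilityMeasure μ]
    (hμ : ∀ u : FreeGroup (Fin r), u ≠ 1 →
      μ (cylinder u) =
        1 / (2 * (r : ℝ≥0∞) * (2 * (r : ℝ≥0∞) - 1) ^ ((FreeGroup.toWord u).length - 1)))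
    (γ : FreeGroup (Fin r)) :
    HC μ γ = (1 + ((r : ℝ) - 1) / r * ((FreeGroup.toWord γ).length : ℝ)) *
        (2 * (r : ℝ) - 1) ^ (-((FreeGroup.toWord γ).length : ℝ) / 2) ∧
    ∀ γ' : FreeGroup (Fin r),
      (FreeGroup.toWord γ').length = (FreeGroup.toWord γ).length → HC μ γ' = HC μ γ := by
  have hvisual : IsVisualMeasure μ := hμ
  -- `F_0` has an empty boundary, which carries no probability measure.
  have hr : 0 < r := ((nonempty_of_isProbabilityMeasure μ).some.1 0).1.pos
  refine ⟨hvisual.HC_eq hr γ, fun γ' hlen => ?_⟩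
  rw [hvisual.HC_eq hr γ', hvisual.HC_eq hr γ, hlen]

/-- Lemma: the Harish-Chandra function.
For every $γ ∈ F_r$, $Ξ(γ) = ∫_B P(γ,ξ)^{1/2} dμ(ξ) = (1 + (r-1)|γ|/r)(2r-1)^{-|γ|/2}$;
in particular $Ξ(γ)$ depends only on $|γ|$. -/
theorem harish_chandra_formula {r : ℕ} (hr : 2 ≤ r)
    [BorelSpace (Boundary r)]
    (μ : Measure (Boundary r)) [IsProbabilityMeasure μ]
    (hμ : ∀ u : FreeGroup (Fin r), u ≠ 1 →
      μ (cylinder u) =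
        1 / (2 * (r : ℝ≥0∞) * (2 * (r : ℝ≥0∞) - 1) ^ ((FreeGroup.toWord u).length - 1)))
    (γ : FreeGroup (Fin r)) :
    HC μ γ = (1 + ((r : ℝ) - 1) / r * ((FreeGroup.toWord γ).length : ℝ)) *
        (2 * (r : ℝ) - 1) ^ (-((FreeGroup.toWord γ).length : ℝ) / 2) ∧
    ∀ γ' : FreeGroup (Fin r),
      (FreeGroup.toWord γ').length = (FreeGroup.toWord γ).length → HC μ γ' = HC μ γ :=
  harish_chandra_formula_general μ hμ γ

end ArxivFree
end

section
/- The measure μ is quasi-invariant under the action of F_r on B, with Radon–Nikodym derivative given by the Poisson kernel: for every γ ∈ F_r, the pushforward measure γ_*μ (defined by γ_*μ(A) = μ(γ⁻¹·A) for Borel A ⊆ B) is absolutely continuous with respect to μ, with density d(γ_*μ)/dμ (ξ) = P(γ,ξ) = (2r-1)^{2(γ|ξ) − |γ|} for μ-almost every ξ ∈ B. -/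
/-!
Setting: the free group `F_r = ⟨a₁,…,a_r⟩` (`r ≥ 2`), its boundary `B` of infinite
reduced words, the visual measure `μ` on `B`, the Gromov product, the Poisson kernel
`P(γ,ξ) = (2r-1)^(2(γ|ξ)-|γ|)` and the Harish-Chandra function `Ξ`.
-/

open MeasureTheory Filter Topology ComplexConjugate
open scoped ENNReal

namespace ArxivFree

lemma bar_bar {r : ℕ} (x : Letter r) : bar (bar x) = x := by
  simp [bar]

lemma reduced_getElem {r : ℕ} {l : List (Letter r)} (hl : FreeGroup.reduce l = l)
    {n : ℕ} (h : n + 1 < l.length) : l[n + 1]'h ≠ bar (l[n]'(by omega)) := by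
  intro hEq
  have hdecomp : l = l.take n ++ (l[n]'(by omega)) :: (l[n+1]'h) :: l.drop (n + 2) := by
    conv_lhs => rw [← List.take_append_drop n l]
    congr 1
    rw [List.drop_eq_getElem_cons (by omega : n < l.length),
      List.drop_eq_getElem_cons h]
  rw [hEq] at hdecomp
  exact FreeGroup.reduce.not (x := (l[n]'(by omega)).1) (b := (l[n]'(by omega)).2)
    (L₂ := l.take n) (L₃ := l.drop (n+2)) (by rw [hl]; exact hdecomp)

def cancelLen {r : ℕ} (l : List (Letter r)) (ξ : ℕ → Letter r) : ℕ :=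
  Nat.findGreatest (fun k => ∀ i, i < k → l.reverse[i]? = some (bar (ξ i))) l.length

def concatSeq {r : ℕ} (l : List (Letter r)) (ξ : ℕ → Letter r) : ℕ → Letter r := fun n =>
  if h : n < l.length - cancelLen l ξ then l[n]'(by omega)
  else ξ (n - (l.length - cancelLen l ξ) + cancelLen l ξ)

lemma concatSeq_reduced {r : ℕ} (l : List (Letter r)) (ξ : ℕ → Letter r)
    (hl : FreeGroup.reduce l = l) (hξ : ∀ i, ξ (i + 1) ≠ bar (ξ i)) :
    ∀ n, concatSeq l ξ (n + 1) ≠ bar (concatSeq l ξ n) := by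
  intro n
  have hmL : cancelLen l ξ ≤ l.length := Nat.findGreatest_le _
  unfold concatSeq
  by_cases h1 : n + 1 < l.length - cancelLen l ξ
  · have h0 : n < l.length - cancelLen l ξ := by omega
    rw [dif_pos h1, dif_pos h0]
    exact reduced_getElem hl (by omega)
  · by_cases h0 : n < l.length - cancelLen l ξ
    · -- junction case
      rw [dif_neg h1, dif_pos h0]
      set m := cancelLen l ξ with hmdef
      have hfg : Nat.findGreatest
          (fun k => ∀ i, i < k → l.reverse[i]? = some (bar (ξ i))) l.length = m := rfl
      have hmlt : m < l.length := by omega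
      have hidx : n + 1 - (l.length - m) + m = m := by omega
      rw [hidx]
      have hnot : ¬ (∀ i, i < m + 1 → l.reverse[i]? = some (bar (ξ i))) :=
        Nat.findGreatest_is_greatest (k := m + 1) (by rw [hfg]; omega) (by omega)
      have hQ : ∀ i, i < m → l.reverse[i]? = some (bar (ξ i)) := by
        rcases Nat.eq_zero_or_pos m with hz | hpos
        · intro i hi; omega
        · exact Nat.findGreatest_of_ne_zero hfg (by omega)
      have hrev : l.reverse[m]? ≠ some (bar (ξ m)) := by
        intro hcon
        apply hnot
        intro i hi
        rcases Nat.lt_succ_iff_lt_or_eq.mp hi with h | rfl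
        · exact hQ i h
        · exact hcon
      intro hEq
      apply hrev
      have hidx2 : l.length - 1 - m = n := by omega
      rw [List.getElem?_reverse hmlt, List.getElem?_eq_getElem (by omega)]
      rw [hEq, bar_bar]
      simp only [hidx2]
    · rw [dif_neg h1, dif_neg h0]
      have hidx : n + 1 - (l.length - cancelLen l ξ) + cancelLen l ξ =
          (n - (l.length - cancelLen l ξ) + cancelLen l ξ) + 1 := by omega
      rw [hidx]
      exact hξ _

/-- The action of the free group on its boundary. -/
def act {r : ℕ} (γ : FreeGroup (Fin r)) (ξ : Boundary r) : Boundary r :=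
  ⟨concatSeq (FreeGroup.toWord γ) ξ.1,
    concatSeq_reduced _ _ (FreeGroup.reduce_toWord γ) ξ.2⟩

/-!
Write `γ ≠ 1` as a reduced product `γ = x γ'` with `x` a letter. Then `γ·ξ = x·(γ'·ξ)` and
`P(γ, ξ) = P(x, ξ) P(γ', x⁻¹·ξ)`, i.e. the Poisson kernel is a multiplicative cocycle, so
`γ_*μ = P(γ, ·) μ` follows by induction on `|γ|` from the case of a single letter `x`.
For a letter both sides are compared on the cylinders `B_u`, a π-system generating the
σ-algebra: `x⁻¹·B_u` is a cylinder one letter shorter or longer (or the complement of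
`B_{x⁻¹}` when `u = x`), so its mass is `(2r-1)^{±1} μ(B_u)`, and `P(x, ·)` is the constant
`(2r-1)^{±1}` on `B_u`, with the sign `+` exactly when `u` begins with `x`.
-/


section LongestPrefix

variable {p : ℕ → Prop} [DecidablePred fun k => ∀ i < k, p i] {n m : ℕ}

lemma forall_lt_findGreatest_forall_lt :
    ∀ i < Nat.findGreatest (fun k => ∀ i < k, p i) n, p i :=
  Nat.findGreatest_spec (P := fun k => ∀ i < k, p i) (Nat.zero_le n) (by simp)

lemma not_findGreatest_forall_lt (h : Nat.findGreatest (fun k => ∀ i < k, p i) n < n) :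
    ¬ p (Nat.findGreatest (fun k => ∀ i < k, p i) n) := fun hp =>
  Nat.findGreatest_is_greatest (Nat.lt_succ_self _) h fun i hi =>
    (Nat.lt_succ_iff_lt_or_eq.mp hi).elim (forall_lt_findGreatest_forall_lt i) (· ▸ hp)

lemma findGreatest_forall_lt_eq (hmn : m ≤ n) (hlt : ∀ i < m, p i) (hm : m = n ∨ ¬ p m) :
    Nat.findGreatest (fun k => ∀ i < k, p i) n = m := by
  refine Nat.findGreatest_eq_iff.mpr ⟨hmn, fun _ => hlt, fun k hk hkn hpk => ?_⟩
  rcases hm with rfl | hm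
  · omega
  · exact hm (hpk m hk)

end LongestPrefix

lemma map_withDensity_of_leftInverse {α β : Type*} [MeasurableSpace α] [MeasurableSpace β]
    {T : α → β} {S : β → α} (hT : Measurable T) (hS : Measurable S)
    (hST : Function.LeftInverse S T) {f : α → ℝ≥0∞} (hf : Measurable f) (μ : Measure α) :
    (μ.withDensity f).map T = (μ.map T).withDensity (f ∘ S) := by
  ext A hA
  rw [Measure.map_apply hT hA, withDensity_apply _ (hT hA), withDensity_apply _ hA,
    setLIntegral_map hA (hf.comp hS) hT]
  simp only [Function.comp_apply, hST _]

def consSeq {α : Type*} (x : α) (ξ : ℕ → α) : ℕ → α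
  | 0 => x
  | n + 1 => ξ n

section

variable {r : ℕ}

lemma cancelLen_le (l : List (Letter r)) (ξ : ℕ → Letter r) : cancelLen l ξ ≤ l.length :=
  Nat.findGreatest_le _

lemma cancelLen_cons (x : Letter r) (t : List (Letter r)) (ξ : ℕ → Letter r) :
    cancelLen (x :: t) ξ =
      if cancelLen t ξ = t.length ∧ ξ t.length = bar x then t.length + 1 else cancelLen t ξ := by
  have hle := cancelLen_le t ξ
  have hspec : ∀ i < cancelLen t ξ, (x :: t).reverse[i]? = some (bar (ξ i)) := fun i hi => by
    rw [List.reverse_cons, List.getElem?_append_left (by rw [List.length_reverse]; omega)]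
    exact forall_lt_findGreatest_forall_lt i hi
  have hlast : (x :: t).reverse[t.length]? = some x := by
    rw [List.reverse_cons, ← List.length_reverse, List.getElem?_concat_length]
  split_ifs with hall
  · refine findGreatest_forall_lt_eq le_rfl (fun i hi => ?_) (.inl rfl)
    rcases Nat.lt_succ_iff_lt_or_eq.mp hi with hi | rfl
    · exact hspec i (hall.1 ▸ hi)
    · rw [hlast, hall.2, bar_bar]
  · refine findGreatest_forall_lt_eq (by rw [List.length_cons]; omega) hspec (.inr ?_)
    rcases hle.lt_or_eq with hlt | heq
    · rw [List.reverse_cons, List.getElem?_append_left (by simpa using hlt)]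
      exact not_findGreatest_forall_lt hlt
    · rw [heq, hlast]
      intro h
      exact hall ⟨heq, by rw [Option.some.inj h, bar_bar]⟩

lemma concatSeq_of_cancelLen_eq_length {l : List (Letter r)} {ξ : ℕ → Letter r}
    (h : cancelLen l ξ = l.length) : concatSeq l ξ = fun n => ξ (n + l.length) := by
  funext n
  simp [concatSeq, h]

lemma head?_eq_concatSeq_zero {l : List (Letter r)} {ξ : ℕ → Letter r}
    (h : cancelLen l ξ < l.length) : l.head? = some (concatSeq l ξ 0) := by
  rw [concatSeq, dif_pos (by omega), List.head?_eq_getElem?, List.getElem?_eq_getElem]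

lemma concatSeq_cons_of_cancelLen_eq {x : Letter r} {t : List (Letter r)} {ξ : ℕ → Letter r}
    (h : cancelLen (x :: t) ξ = cancelLen t ξ) :
    concatSeq (x :: t) ξ = consSeq x (concatSeq t ξ) := by
  have := cancelLen_le t ξ
  funext n
  cases n with
  | zero => rw [concatSeq, dif_pos (by rw [h, List.length_cons]; omega)]; rfl
  | succ j =>
    simp only [concatSeq, consSeq, h, List.length_cons]
    by_cases hj : j < t.length - cancelLen t ξ
    · rw [dif_pos (by omega), dif_pos hj, List.getElem_cons_succ]
    · rw [dif_neg (by omega), dif_neg hj]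
      congr 1
      omega

lemma concatSeq_nil (ξ : ℕ → Letter r) : concatSeq [] ξ = ξ :=
  concatSeq_of_cancelLen_eq_length (Nat.le_zero.mp (cancelLen_le _ _))

lemma concatSeq_singleton (x : Letter r) (ξ : ℕ → Letter r) :
    concatSeq [x] ξ = if ξ 0 = bar x then fun n => ξ (n + 1) else consSeq x ξ := by
  have hnil : cancelLen ([] : List (Letter r)) ξ = 0 := Nat.le_zero.mp (cancelLen_le _ _)
  have hcancel := cancelLen_cons x [] ξ
  simp only [hnil, List.length_nil, true_and, zero_add] at hcancel
  split_ifs at hcancel ⊢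
  · exact concatSeq_of_cancelLen_eq_length hcancel
  · rw [concatSeq_cons_of_cancelLen_eq (hcancel.trans hnil.symm), concatSeq_nil]

lemma concatSeq_cons {x : Letter r} {t : List (Letter r)} (ξ : ℕ → Letter r)
    (ht : t.head? ≠ some (bar x)) : concatSeq (x :: t) ξ = concatSeq [x] (concatSeq t ξ) := by
  rw [concatSeq_singleton]
  by_cases hall : cancelLen t ξ = t.length ∧ ξ t.length = bar x
  · have hxt : cancelLen (x :: t) ξ = (x :: t).length := by rw [cancelLen_cons, if_pos hall]; rfl
    rw [concatSeq_of_cancelLen_eq_length hxt, concatSeq_of_cancelLen_eq_length hall.1,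
      if_pos (by simpa using hall.2)]
    funext n
    simp only [List.length_cons]
    congr 1
    omega
  · rw [concatSeq_cons_of_cancelLen_eq (by rw [cancelLen_cons, if_neg hall]), if_neg]
    rcases (cancelLen_le t ξ).lt_or_eq with hlt | heq
    · exact fun h0 => ht (by rw [head?_eq_concatSeq_zero hlt, h0])
    · rw [concatSeq_of_cancelLen_eq_length heq]
      simpa using not_and.mp hall heq

lemma ne_bar_iff {x y : Letter r} : y ≠ bar x ↔ (x.1 = y.1 → x.2 = y.2) := by
  obtain ⟨i, a⟩ := x
  obtain ⟨j, b⟩ := y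
  cases a <;> cases b <;> simp [bar, eq_comm]

lemma isReduced_cons_iff {x : Letter r} {t : List (Letter r)} :
    FreeGroup.IsReduced (x :: t) ↔ t.head? ≠ some (bar x) ∧ FreeGroup.IsReduced t := by
  rw [FreeGroup.IsReduced, List.isChain_cons]
  cases t <;> simp [ne_bar_iff, FreeGroup.IsReduced]

def ofLetter (x : Letter r) : FreeGroup (Fin r) := FreeGroup.mk [x]

lemma toWord_ofLetter (x : Letter r) : (ofLetter x).toWord = [x] := by
  rw [ofLetter, FreeGroup.toWord_mk, FreeGroup.reduce_singleton]

lemma ofLetter_ne_one (x : Letter r) : ofLetter x ≠ 1 := by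
  simp [← FreeGroup.toWord_inj, toWord_ofLetter]

lemma toWord_ofLetter_mul {x : Letter r} {γ : FreeGroup (Fin r)}
    (h : γ.toWord.head? ≠ some (bar x)) : (ofLetter x * γ).toWord = x :: γ.toWord := by
  rw [← FreeGroup.mk_toWord (x := γ), ofLetter, FreeGroup.mul_mk, FreeGroup.toWord_mk,
    FreeGroup.mk_toWord]
  exact (isReduced_cons_iff.mpr ⟨h, FreeGroup.isReduced_toWord⟩).reduce_eq

@[elab_as_elim]
lemma induction_on_ofLetter_mul {P : FreeGroup (Fin r) → Prop} (one : P 1)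
    (ofLetter_mul : ∀ x γ, γ.toWord.head? ≠ some (bar x) → P γ → P (ofLetter x * γ))
    (γ : FreeGroup (Fin r)) : P γ := by
  suffices ∀ l : List (Letter r), FreeGroup.IsReduced l → P (FreeGroup.mk l) by
    simpa only [FreeGroup.mk_toWord] using this _ (FreeGroup.isReduced_toWord (x := γ))
  intro l hl
  induction l with
  | nil => exact one
  | cons x t ih =>
    obtain ⟨hx, ht⟩ := isReduced_cons_iff.mp hl
    rw [← List.singleton_append, ← FreeGroup.mul_mk]
    exact ofLetter_mul x _ (by rwa [FreeGroup.toWord_mk, ht.reduce_eq]) (ih ht)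

lemma act_ofLetter_val (x : Letter r) (ξ : Boundary r) :
    (act (ofLetter x) ξ).1 = if ξ.1 0 = bar x then fun n => ξ.1 (n + 1) else consSeq x ξ.1 := by
  change concatSeq (ofLetter x).toWord ξ.1 = _
  rw [toWord_ofLetter, concatSeq_singleton]

lemma act_one : act (1 : FreeGroup (Fin r)) = id :=
  funext fun ξ => Subtype.ext <| by simp only [act, FreeGroup.toWord_one, concatSeq_nil]; rfl

lemma act_ofLetter_mul {x : Letter r} {γ : FreeGroup (Fin r)}
    (h : γ.toWord.head? ≠ some (bar x)) : act (ofLetter x * γ) = act (ofLetter x) ∘ act γ :=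
  funext fun ξ => Subtype.ext <| by
    simp only [act, Function.comp, toWord_ofLetter_mul h, toWord_ofLetter, concatSeq_cons _ h]

lemma act_bar_act (x : Letter r) (ξ : Boundary r) :
    act (ofLetter (bar x)) (act (ofLetter x) ξ) = ξ := by
  apply Subtype.ext
  rw [act_ofLetter_val, act_ofLetter_val, bar_bar]
  funext n
  by_cases h : ξ.1 0 = bar x
  · have h1 : ξ.1 1 ≠ x := fun h1 => ξ.2 0 (by rw [h1, h, bar_bar])
    cases n <;> simp [h, h1, consSeq]
  · simp [h, consSeq]

lemma gromov_nil (η : ℕ → Letter r) : gromov [] η = 0 := rfl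

lemma gromov_cons (y : Letter r) (w : List (Letter r)) (η : ℕ → Letter r) :
    gromov (y :: w) η = if η 0 = y then gromov w (fun n => η (n + 1)) + 1 else 0 := by
  split_ifs with h
  · have hle : gromov w (fun n => η (n + 1)) ≤ w.length := Nat.findGreatest_le _
    refine findGreatest_forall_lt_eq (by simpa using hle) (fun i hi => ?_) ?_
    · cases i with
      | zero => simp [h]
      | succ j =>
        simpa using forall_lt_findGreatest_forall_lt
          (p := fun i => w[i]? = some (η (i + 1))) (n := w.length) j (Nat.lt_of_succ_lt_succ hi)
    · rw [List.length_cons, List.getElem?_cons_succ, Nat.add_right_cancel_iff]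
      rcases hle.lt_or_eq with hlt | heq
      · exact .inr (not_findGreatest_forall_lt hlt)
      · exact .inl heq
  · exact findGreatest_forall_lt_eq (Nat.zero_le _) (by simp) (.inr (by simpa [eq_comm] using h))

lemma gromov_consSeq_of_head?_ne {y : Letter r} {w : List (Letter r)} (η : ℕ → Letter r)
    (h : w.head? ≠ some y) : gromov w (consSeq y η) = 0 := by
  cases w with
  | nil => rfl
  | cons z w =>
    rw [gromov_cons, if_neg]
    simpa [consSeq, eq_comm] using h

lemma PK_one (ξ : Boundary r) : PK 1 ξ = 1 := by
  simp [PK, gromov_nil]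

lemma PK_ofLetter (x : Letter r) (ξ : Boundary r) :
    PK (ofLetter x) ξ = if ξ.1 0 = x then 2 * (r : ℝ) - 1 else (2 * (r : ℝ) - 1)⁻¹ := by
  rw [PK, toWord_ofLetter, gromov_cons]
  split_ifs <;> norm_num [gromov_nil]

lemma two_mul_sub_one_pos (hr : 0 < r) : (0 : ℝ) < 2 * r - 1 := by
  linarith [(Nat.one_le_cast.mpr hr : (1 : ℝ) ≤ r)]

lemma PK_pos (hr : 0 < r) (γ : FreeGroup (Fin r)) (ξ : Boundary r) : 0 < PK γ ξ :=
  zpow_pos (two_mul_sub_one_pos hr) _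

lemma PK_ofLetter_mul (hr : 0 < r) {x : Letter r} {γ : FreeGroup (Fin r)}
    (h : γ.toWord.head? ≠ some (bar x)) (ξ : Boundary r) :
    PK (ofLetter x * γ) ξ = PK (ofLetter x) ξ * PK γ (act (ofLetter (bar x)) ξ) := by
  rw [PK, PK, PK, toWord_ofLetter_mul h, toWord_ofLetter, ← zpow_add₀ (two_mul_sub_one_pos hr).ne',
    act_ofLetter_val,
    bar_bar, gromov_cons, gromov_cons]
  congr 1
  by_cases hξ : ξ.1 0 = x
  · simp only [hξ, if_true, gromov_nil, List.length_cons, List.length_nil]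
    push_cast
    ring
  · simp only [hξ, if_false, gromov_consSeq_of_head?_ne _ h, List.length_cons, List.length_nil]
    push_cast
    ring

lemma isPrefixSeq_cons {y : Letter r} {w : List (Letter r)} {η : ℕ → Letter r} :
    IsPrefixSeq (y :: w) η ↔ η 0 = y ∧ IsPrefixSeq w fun n => η (n + 1) := by
  refine ⟨fun h => ⟨?_, fun i hi => ?_⟩, fun ⟨h0, h⟩ i hi => ?_⟩
  · simpa [eq_comm] using h 0 (by simp)
  · simpa using h (i + 1) (by simpa using hi)
  · cases i with
    | zero => simp [h0]
    | succ i => simpa using h i (by simpa using hi)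

def wordCylinder (w : List (Letter r)) : Set (Boundary r) := {ξ | IsPrefixSeq w ξ.1}

lemma cylinder_eq_wordCylinder (u : FreeGroup (Fin r)) : cylinder u = wordCylinder u.toWord :=
  rfl

lemma wordCylinder_nil : wordCylinder ([] : List (Letter r)) = Set.univ :=
  Set.eq_univ_of_forall fun _ i hi => absurd hi (Nat.not_lt_zero i)

lemma wordCylinder_singleton (y : Letter r) : wordCylinder [y] = {ξ | ξ.1 0 = y} := by
  ext ξ
  simp [wordCylinder, IsPrefixSeq, eq_comm]

lemma measurable_coord (i : ℕ) : Measurable fun ξ : Boundary r => ξ.1 i :=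
  (measurable_pi_apply i).comp measurable_subtype_coe

lemma measurableSet_wordCylinder (w : List (Letter r)) : MeasurableSet (wordCylinder w) := by
  have : wordCylinder w = ⋂ i : Fin w.length,
      (fun ξ : Boundary r => ξ.1 i) ⁻¹' {a | w[(i : ℕ)]? = some a} := by
    ext ξ
    simp only [wordCylinder, Set.mem_iInter, Set.mem_preimage, Set.mem_ofPred_eq]
    exact ⟨fun h i => h i i.isLt, fun h i hi => h ⟨i, hi⟩⟩
  rw [this]
  exact .iInter fun i => measurable_coord i (Set.to_countable _).measurableSet

lemma measurableSet_cylinder (u : FreeGroup (Fin r)) : MeasurableSet (cylinder u) :=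
  measurableSet_wordCylinder _

lemma measurable_act_ofLetter (x : Letter r) : Measurable (act (ofLetter x)) := by
  refine Measurable.subtype_mk (f := fun ξ => (act (ofLetter x) ξ).1) ?_
  simp only [act_ofLetter_val]
  refine .ite (measurable_coord 0 (measurableSet_singleton _))
    (measurable_pi_lambda _ fun n => measurable_coord (n + 1))
    (measurable_pi_lambda _ fun n => ?_)
  cases n with
  | zero => exact measurable_const
  | succ n => exact measurable_coord n

lemma measurable_act (γ : FreeGroup (Fin r)) : Measurable (act γ) := by
  induction γ using induction_on_ofLetter_mul with
  | one => exact act_one ▸ measurable_id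
  | ofLetter_mul x γ h ih => exact act_ofLetter_mul h ▸ (measurable_act_ofLetter x).comp ih

lemma measurable_PK (hr : 0 < r) (γ : FreeGroup (Fin r)) : Measurable (PK γ) := by
  induction γ using induction_on_ofLetter_mul with
  | one => simpa only [funext PK_one] using measurable_const
  | ofLetter_mul x γ h ih =>
    rw [funext (PK_ofLetter_mul hr h), funext (PK_ofLetter x)]
    exact (Measurable.ite (measurable_coord 0 (measurableSet_singleton _)) measurable_const
      measurable_const).mul (ih.comp (measurable_act_ofLetter _))

def cylinders (r : ℕ) : Set (Set (Boundary r)) :=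
  {A | ∃ u : FreeGroup (Fin r), u ≠ 1 ∧ cylinder u = A}

lemma cylinder_subset_of_mem {u v : FreeGroup (Fin r)} {ξ : Boundary r} (hu : ξ ∈ cylinder u)
    (hv : ξ ∈ cylinder v) (huv : u.toWord.length ≤ v.toWord.length) :
    cylinder v ⊆ cylinder u := fun η hη i hi => by
  rw [hu i hi, ← hv i (by omega), hη i (by omega)]

lemma isPiSystem_cylinders : IsPiSystem (cylinders r) := by
  rintro _ ⟨u, hu, rfl⟩ _ ⟨v, hv, rfl⟩ ⟨ξ, hξu, hξv⟩
  rcases le_total u.toWord.length v.toWord.length with huv | hvu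
  · rw [Set.inter_eq_right.mpr (cylinder_subset_of_mem hξu hξv huv)]
    exact ⟨v, hv, rfl⟩
  · rw [Set.inter_eq_left.mpr (cylinder_subset_of_mem hξv hξu hvu)]
    exact ⟨u, hu, rfl⟩

lemma exists_mem_cylinder_length_eq (ξ : Boundary r) (k : ℕ) :
    ∃ u : FreeGroup (Fin r), u.toWord.length = k ∧ ξ ∈ cylinder u := by
  let w := List.ofFn fun j : Fin k => ξ.1 j
  have hw : FreeGroup.IsReduced w := List.isChain_iff_getElem.mpr fun i hi =>
    ne_bar_iff.mp (by simpa [w] using ξ.2 i)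
  have htoWord : (FreeGroup.mk w).toWord = w := by rw [FreeGroup.toWord_mk, hw.reduce_eq]
  refine ⟨FreeGroup.mk w, by simp [htoWord, w], fun i hi => ?_⟩
  simp only [htoWord, w, List.length_ofFn] at hi ⊢
  simp [hi]

lemma measurableSet_coord_eq_generateFrom (i : ℕ) (a : Letter r) :
    MeasurableSet[.generateFrom (cylinders r)] {ξ : Boundary r | ξ.1 i = a} := by
  have : {ξ : Boundary r | ξ.1 i = a} =
      ⋃ (u : FreeGroup (Fin r)) (_ : u.toWord[i]? = some a), cylinder u := by
    ext ξ
    simp only [Set.mem_ofPred_eq, Set.mem_iUnion]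
    constructor
    · rintro rfl
      obtain ⟨u, hlen, hξ⟩ := exists_mem_cylinder_length_eq ξ (i + 1)
      exact ⟨u, hξ i (by omega), hξ⟩
    · rintro ⟨u, hui, hξ⟩
      have hi : i < u.toWord.length := (List.getElem?_eq_some_iff.mp hui).1
      exact Option.some.inj ((hξ i hi).symm.trans hui)
  rw [this]
  refine .iUnion fun u => .iUnion fun hu => .basic _ ⟨u, fun h1 => ?_, rfl⟩
  simp [h1] at hu

lemma generateFrom_cylinders :
    (inferInstance : MeasurableSpace (Boundary r)) = .generateFrom (cylinders r) := by
  refine le_antisymm ?_ (MeasurableSpace.generateFrom_le ?_)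
  · have : Measurable[.generateFrom (cylinders r)] (Subtype.val : Boundary r → ℕ → Letter r) :=
      (@measurable_pi_iff _ _ _ (.generateFrom _) _ _).mpr fun i =>
        @measurable_to_countable' _ _ _ _ (.generateFrom _) _
          (measurableSet_coord_eq_generateFrom i)
    rintro _ ⟨s, hs, rfl⟩
    exact this hs
  · rintro _ ⟨u, -, rfl⟩
    exact measurableSet_cylinder u

lemma preimage_act_ofLetter_wordCylinder_cons_self (x : Letter r) (w : List (Letter r)) :
    act (ofLetter x) ⁻¹' wordCylinder (x :: w) = wordCylinder w \ {ξ | ξ.1 0 = bar x} := by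
  ext ξ
  simp only [wordCylinder, Set.mem_preimage, Set.mem_sdiff, Set.mem_ofPred_eq,
    act_ofLetter_val]
  by_cases h : ξ.1 0 = bar x
  · have h1 : ξ.1 1 ≠ x := fun h1 => ξ.2 0 (by rw [h1, h, bar_bar])
    simp [h, h1, isPrefixSeq_cons]
  · simp [h, isPrefixSeq_cons, consSeq]

lemma preimage_act_ofLetter_wordCylinder_cons_of_ne {x y : Letter r} (hyx : y ≠ x)
    (w : List (Letter r)) :
    act (ofLetter x) ⁻¹' wordCylinder (y :: w) = wordCylinder (bar x :: y :: w) := by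
  ext ξ
  simp only [wordCylinder, Set.mem_preimage, Set.mem_ofPred_eq, act_ofLetter_val]
  by_cases h : ξ.1 0 = bar x
  · rw [if_pos h, isPrefixSeq_cons (w := y :: w)]
    simp [h]
  · simp [h, isPrefixSeq_cons, consSeq, hyx.symm]

lemma two_mul_sub_one_ne_zero (hr : 0 < r) : (2 * (r : ℝ≥0∞) - 1) ≠ 0 := by
  have : (1 : ℝ≥0∞) < 2 * r := by exact_mod_cast (by omega : 1 < 2 * r)
  exact (tsub_pos_iff_lt.mpr this).ne'

lemma one_div_two_mul_mul_pow_eq (hr : 0 < r) (k : ℕ) :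
    1 / (2 * (r : ℝ≥0∞) * (2 * r - 1) ^ k) =
      (2 * r - 1) * (1 / (2 * (r : ℝ≥0∞) * (2 * r - 1) ^ (k + 1))) := by
  rw [mul_one_div, pow_succ, ← mul_assoc,
    ← ENNReal.mul_div_mul_right 1 _ (two_mul_sub_one_ne_zero hr) (by finiteness), one_mul]

lemma one_sub_one_div_two_mul (hr : 0 < r) :
    1 - 1 / (2 * (r : ℝ≥0∞)) = (2 * r - 1) * (1 / (2 * (r : ℝ≥0∞))) := by
  have h2r : 2 * (r : ℝ≥0∞) ≠ 0 := mul_ne_zero two_ne_zero (Nat.cast_ne_zero.mpr hr.ne')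
  rw [mul_one_div, ENNReal.sub_div fun _ _ => h2r, ENNReal.div_self h2r (by finiteness)]

lemma ofReal_PK_ofLetter (hr : 0 < r) (x : Letter r) (ξ : Boundary r) :
    ENNReal.ofReal (PK (ofLetter x) ξ) =
      if ξ.1 0 = x then 2 * (r : ℝ≥0∞) - 1 else (2 * (r : ℝ≥0∞) - 1)⁻¹ := by
  have hq : ENNReal.ofReal (2 * r - 1) = 2 * (r : ℝ≥0∞) - 1 := by
    rw [ENNReal.ofReal_sub _ zero_le_one, ENNReal.ofReal_one, ← Nat.cast_ofNat (R := ℝ),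
      ← Nat.cast_mul, ENNReal.ofReal_natCast, Nat.cast_mul, Nat.cast_ofNat]
  rw [PK_ofLetter]
  split_ifs
  · exact hq
  · rw [ENNReal.ofReal_inv_of_pos (two_mul_sub_one_pos hr), hq]

variable (r) in
def IsUniformMeasure (μ : Measure (Boundary r)) : Prop :=
  ∀ u : FreeGroup (Fin r), u ≠ 1 →
    μ (cylinder u) =
      1 / (2 * (r : ℝ≥0∞) * (2 * (r : ℝ≥0∞) - 1) ^ ((FreeGroup.toWord u).length - 1))

section UniformMeasure

variable {μ : Measure (Boundary r)}

lemma IsUniformMeasure.measure_wordCylinder (hμ : IsUniformMeasure r μ) {w : List (Letter r)}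
    (hw : FreeGroup.IsReduced w) (hne : w ≠ []) :
    μ (wordCylinder w) = 1 / (2 * (r : ℝ≥0∞) * (2 * (r : ℝ≥0∞) - 1) ^ (w.length - 1)) := by
  have hmk : (FreeGroup.mk w).toWord = w := by rw [FreeGroup.toWord_mk, hw.reduce_eq]
  have h := hμ (.mk w) fun h1 => hne (by rw [← hmk, h1, FreeGroup.toWord_one])
  rwa [cylinder_eq_wordCylinder, hmk] at h

lemma setLIntegral_ofReal_PK_ofLetter_cylinder (hr : 0 < r) (x : Letter r)
    {u : FreeGroup (Fin r)} (hu : u ≠ 1) :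
    ∫⁻ ξ in cylinder u, ENNReal.ofReal (PK (ofLetter x) ξ) ∂μ =
      (if u.toWord.head? = some x then 2 * (r : ℝ≥0∞) - 1 else (2 * (r : ℝ≥0∞) - 1)⁻¹) *
        μ (cylinder u) := by
  obtain ⟨y, w, huw⟩ := List.exists_cons_of_ne_nil (mt FreeGroup.toWord_eq_nil_iff.mp hu)
  rw [← setLIntegral_const]
  refine setLIntegral_congr_fun (measurableSet_cylinder u) fun ξ hξ => ?_
  rw [cylinder_eq_wordCylinder, huw, wordCylinder, Set.mem_ofPred_eq, isPrefixSeq_cons] at hξ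
  simp [ofReal_PK_ofLetter hr, huw, hξ.1]

lemma IsUniformMeasure.measure_preimage_act_ofLetter_cylinder [IsProbabilityMeasure μ]
    (hr : 0 < r) (hμ : IsUniformMeasure r μ) (x : Letter r) {u : FreeGroup (Fin r)}
    (hu : u ≠ 1) :
    μ (act (ofLetter x) ⁻¹' cylinder u) =
      (if u.toWord.head? = some x then 2 * (r : ℝ≥0∞) - 1 else (2 * (r : ℝ≥0∞) - 1)⁻¹) *
        μ (cylinder u) := by
  obtain ⟨y, w, huw⟩ := List.exists_cons_of_ne_nil (mt FreeGroup.toWord_eq_nil_iff.mp hu)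
  have hred : FreeGroup.IsReduced (y :: w) := huw ▸ FreeGroup.isReduced_toWord
  rw [cylinder_eq_wordCylinder, huw, hμ.measure_wordCylinder hred (List.cons_ne_nil _ _)]
  by_cases hyx : y = x
  · subst hyx
    rw [preimage_act_ofLetter_wordCylinder_cons_self]
    simp only [List.head?_cons, if_true, List.length_cons, Nat.add_sub_cancel]
    cases w with
    | nil =>
      rw [wordCylinder_nil, ← Set.compl_eq_univ_sdiff, ← wordCylinder_singleton,
        prob_compl_eq_one_sub (measurableSet_wordCylinder _),
        hμ.measure_wordCylinder FreeGroup.IsReduced.singleton (List.cons_ne_nil _ _)]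
      simpa using one_sub_one_div_two_mul hr
    | cons z w =>
      have hz := (isReduced_cons_iff.mp hred).1
      rw [sdiff_eq_left.mpr, hμ.measure_wordCylinder (isReduced_cons_iff.mp hred).2
        (List.cons_ne_nil _ _), List.length_cons, Nat.add_sub_cancel,
        one_div_two_mul_mul_pow_eq hr]
      · refine Set.disjoint_left.mpr fun ξ hξ h0 => hz ?_
        rw [wordCylinder, Set.mem_ofPred_eq, isPrefixSeq_cons] at hξ
        rw [List.head?_cons, ← hξ.1, h0]
  · have hred' : FreeGroup.IsReduced (bar x :: y :: w) :=
      isReduced_cons_iff.mpr ⟨by simpa [bar_bar] using hyx, hred⟩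
    rw [preimage_act_ofLetter_wordCylinder_cons_of_ne hyx,
      hμ.measure_wordCylinder hred' (List.cons_ne_nil _ _)]
    simp only [List.head?_cons, Option.some.injEq, hyx, if_false, List.length_cons,
      Nat.add_sub_cancel]
    rw [one_div_two_mul_mul_pow_eq hr w.length, ← mul_assoc,
      ENNReal.inv_mul_cancel (two_mul_sub_one_ne_zero hr) (by finiteness), one_mul]

lemma IsUniformMeasure.map_act_ofLetter [IsProbabilityMeasure μ] (hr : 0 < r)
    (hμ : IsUniformMeasure r μ) (x : Letter r) :
    μ.map (act (ofLetter x)) = μ.withDensity fun ξ => ENNReal.ofReal (PK (ofLetter x) ξ) := by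
  refine Measure.ext_of_generateFrom_of_cover_subset generateFrom_cylinders isPiSystem_cylinders
    (T := Set.range fun y => cylinder (ofLetter y)) ?_ (Set.countable_range _) ?_
    (fun _ _ => measure_ne_top _ _) ?_
  · rintro _ ⟨y, rfl⟩
    exact ⟨ofLetter y, ofLetter_ne_one y, rfl⟩
  · refine Set.eq_univ_of_forall fun ξ => Set.mem_sUnion_of_mem ?_ ⟨ξ.1 0, rfl⟩
    show ξ ∈ cylinder (ofLetter (ξ.1 0))
    rw [cylinder_eq_wordCylinder, toWord_ofLetter, wordCylinder_singleton]
    rfl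
  · rintro _ ⟨u, hu, rfl⟩
    rw [Measure.map_apply (measurable_act_ofLetter x) (measurableSet_cylinder u),
      withDensity_apply _ (measurableSet_cylinder u),
      hμ.measure_preimage_act_ofLetter_cylinder hr x hu,
      setLIntegral_ofReal_PK_ofLetter_cylinder hr x hu]

lemma IsUniformMeasure.map_act [IsProbabilityMeasure μ] (hr : 0 < r)
    (hμ : IsUniformMeasure r μ) (γ : FreeGroup (Fin r)) :
    μ.map (act γ) = μ.withDensity fun ξ => ENNReal.ofReal (PK γ ξ) := by
  induction γ using induction_on_ofLetter_mul with
  | one => simp [act_one, PK_one]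
  | ofLetter_mul x γ h ih =>
    have hPK := fun γ => (measurable_PK hr γ).ennreal_ofReal
    rw [act_ofLetter_mul h, ← Measure.map_map (measurable_act_ofLetter x) (measurable_act γ), ih,
      map_withDensity_of_leftInverse (measurable_act_ofLetter x) (measurable_act_ofLetter _)
        (act_bar_act x) (hPK γ),
      hμ.map_act_ofLetter hr x, ← withDensity_mul _ (hPK _) ((hPK γ).comp (measurable_act _))]
    congr with ξ
    rw [PK_ofLetter_mul hr h, ENNReal.ofReal_mul (PK_pos hr _ ξ).le]
    rfl

end UniformMeasure

end

theorem quasi_invariance_radon_nikodym_general {r : ℕ} (hr : 2 ≤ r)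
    (μ : Measure (Boundary r)) [IsProbabilityMeasure μ]
    (hμ : ∀ u : FreeGroup (Fin r), u ≠ 1 →
      μ (cylinder u) =
        1 / (2 * (r : ℝ≥0∞) * (2 * (r : ℝ≥0∞) - 1) ^ ((FreeGroup.toWord u).length - 1)))
    (γ : FreeGroup (Fin r)) :
    μ.map (act γ) ≪ μ ∧
    (μ.map (act γ)).rnDeriv μ =ᵐ[μ] fun ξ => ENNReal.ofReal (PK γ ξ) := by
  rw [IsUniformMeasure.map_act (by omega) hμ γ]
  exact ⟨withDensity_absolutelyContinuous _ _,
    Measure.rnDeriv_withDensity _ (measurable_PK (by omega) γ).ennreal_ofReal⟩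

/-- quasi-invariance of $μ$ and the Radon–Nikodym derivative.
For every $γ ∈ F_r$, the pushforward $γ_*μ$ of $μ$ under $ξ ↦ γ·ξ$ is absolutely
continuous with respect to $μ$, with density
$d(γ_*μ)/dμ(ξ) = P(γ,ξ) = (2r-1)^{2(γ|ξ)-|γ|}$ for $μ$-a.e. $ξ$. -/
theorem quasi_invariance_radon_nikodym {r : ℕ} (hr : 2 ≤ r)
    [BorelSpace (Boundary r)]
    (μ : Measure (Boundary r)) [IsProbabilityMeasure μ]
    (hμ : ∀ u : FreeGroup (Fin r), u ≠ 1 →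
      μ (cylinder u) =
        1 / (2 * (r : ℝ≥0∞) * (2 * (r : ℝ≥0∞) - 1) ^ ((FreeGroup.toWord u).length - 1)))
    (γ : FreeGroup (Fin r)) :
    μ.map (act γ) ≪ μ ∧
    (μ.map (act γ)).rnDeriv μ =ᵐ[μ] fun ξ => ENNReal.ofReal (PK γ ξ) :=
  quasi_invariance_radon_nikodym_general hr μ hμ γ

end ArxivFree
end
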